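/- The class of submetrizable coarse spaces is λ-stable: if (X, E) is submetrizable and (X, E') is λ-equivalent to (X, E), then (X, E') is submetrizable. -/

import Mathlib

open Set

/-- A coarse structure (ballean) on a set `X`. -/
structure CoarseStruct (X : Type*) where
  sets : Set (Set (X × X))
  diagonal_mem : Set.diagonal X ∈ sets
  diagonal_subset : ∀ E ∈ sets, Set.diagonal X ⊆ E
  comp_mem : ∀ E ∈ sets, ∀ F ∈ sets,
    {p : X × X | ∃ z, (p.1, z) ∈ E ∧ (z, p.2) ∈ F} ∈ sets
  inv_mem : ∀ E ∈ sets, {p : X × X | (p.2, p.1) ∈ E} ∈ sets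
  subset_mem : ∀ E ∈ sets, ∀ E' : Set (X × X),
    Set.diagonal X ⊆ E' → E' ⊆ E → E' ∈ sets
  cover : ∀ p : X × X, ∃ E ∈ sets, p ∈ E

namespace CoarseStruct

variable {X : Type*}

/-- The ball `E[A]` of radius `E` around `A`. -/
def ball (E : Set (X × X)) (A : Set X) : Set X := {y | ∃ a ∈ A, (a, y) ∈ E}

/-- A set is bounded if it is contained in a ball around a point. -/
def IsBounded (C : CoarseStruct X) (B : Set X) : Prop :=
  ∃ E ∈ C.sets, ∃ x : X, B ⊆ ball E {x}

/-- Closeness: `A δ B`. -/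
def Close (C : CoarseStruct X) (A B : Set X) : Prop :=
  ∃ E ∈ C.sets, A ⊆ ball E B ∧ B ⊆ ball E A

/-- Linkness: `A λ B`. -/
def Linked (C : CoarseStruct X) (A B : Set X) : Prop :=
  (C.IsBounded A ∧ C.IsBounded B) ∨
  ∃ A' B' : Set X, A' ⊆ A ∧ B' ⊆ B ∧ ¬C.IsBounded A' ∧ ¬C.IsBounded B' ∧ C.Close A' B'

def LambdaEquiv (C C' : CoarseStruct X) : Prop :=
  ∀ A B : Set X, C.Linked A B ↔ C'.Linked A B

def DeltaEquiv (C C' : CoarseStruct X) : Prop :=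
  ∀ A B : Set X, C.Close A B ↔ C'.Close A B

def Discrete (C : CoarseStruct X) : Prop :=
  ∀ E ∈ C.sets, ∃ B : Set X, C.IsBounded B ∧ ∀ x ∉ B, ball E {x} = {x}

def Large (C : CoarseStruct X) (Y : Set X) : Prop :=
  ∃ E ∈ C.sets, ball E Y = Set.univ

/-- The subballean on `Y` is discrete. -/
def DiscreteOn (C : CoarseStruct X) (Y : Set X) : Prop :=
  ∀ E ∈ C.sets, ∃ B : Set X, C.IsBounded B ∧ ∀ y ∈ Y \ B, ball E {y} ∩ Y = {y}

def CoarselyDiscrete (C : CoarseStruct X) : Prop :=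
  ∃ Y : Set X, C.Large Y ∧ C.DiscreteOn Y

def LambdaRigid (C : CoarseStruct X) : Prop :=
  ∀ C' : CoarseStruct X, LambdaEquiv C C' → C' = C

def DeltaRigid (C : CoarseStruct X) : Prop :=
  ∀ C' : CoarseStruct X, DeltaEquiv C C' → C' = C

def IsBase (C : CoarseStruct X) (B : Set (Set (X × X))) : Prop :=
  B ⊆ C.sets ∧ ∀ E ∈ C.sets, ∃ E' ∈ B, E ⊆ E'

/-- Metrizable: the coarse structure has a countable base. -/
def Metrizable (C : CoarseStruct X) : Prop :=
  ∃ B : Set (Set (X × X)), B.Countable ∧ C.IsBase B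

/-- Ordinal: the coarse structure has a base linearly ordered by inclusion. -/
def Ordinal (C : CoarseStruct X) : Prop :=
  ∃ B : Set (Set (X × X)), C.IsBase B ∧ IsChain (· ⊆ ·) B

def MacroUniform (C : CoarseStruct X) (f : X → ℝ) : Prop :=
  ∀ E ∈ C.sets, ∃ r : ℝ, 0 < r ∧
    ∀ x : X, ∀ y ∈ ball E {x}, ∀ z ∈ ball E {x}, |f y - f z| ≤ r

def Submetrizable (C : CoarseStruct X) : Prop :=
  ¬C.IsBounded Set.univ ∧ ∃ C'' : CoarseStruct X,
    C.sets ⊆ C''.sets ∧ ¬C''.IsBounded Set.univ ∧ C''.Metrizable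

def SlowlyOscillating (C : CoarseStruct X) (f : X → ℝ) : Prop :=
  ∀ E ∈ C.sets, ∀ ε : ℝ, 0 < ε → ∃ B : Set X, C.IsBounded B ∧
    ∀ x ∉ B, ∀ y ∈ ball E {x}, ∀ z ∈ ball E {x}, |f y - f z| < ε

/-- The entourage `H_{(E,Φ)}`: `H[x] = {x}` for `x ∈ Φ` and `H[x] = E[x] \ Φ` for `x ∉ Φ`. -/
def EPhiBase (E : Set (X × X)) (Φ : Set X) : Set (X × X) :=
  {p | (p.1 ∈ Φ ∧ p.1 = p.2) ∨ (p.1 ∉ Φ ∧ p.2 ∉ Φ ∧ (p.1, p.2) ∈ E)}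

/-- The family of entourages of the coarse structure `E_φ` with base `{H_{(E,Φ)}}`. -/
def EPhiSets (C : CoarseStruct X) (φ : Filter X) : Set (Set (X × X)) :=
  {E' | Set.diagonal X ⊆ E' ∧ ∃ E ∈ C.sets, ∃ Φ ∈ φ, E' ⊆ EPhiBase E Φ}

/-- The set `B♯` of ultrafilters containing the complement of every bounded set. -/
def Bsharp (C : CoarseStruct X) : Set (Ultrafilter X) :=
  {p | ∀ B : Set X, C.IsBounded B → Bᶜ ∈ p}

/-- Parallelity of ultrafilters: `p ∥ q`. -/
def Parallel (C : CoarseStruct X) (p q : Ultrafilter X) : Prop :=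
  ∃ E ∈ C.sets, ∀ P ∈ p, ball E P ∈ q

def AsympDisjoint (C : CoarseStruct X) (A B : Set X) : Prop :=
  ∀ E ∈ C.sets, C.IsBounded (ball E A ∩ ball E B)

def AsympNbhd (C : CoarseStruct X) (A U : Set X) : Prop :=
  ∀ E ∈ C.sets, C.IsBounded (ball E A \ U)

def Normal (C : CoarseStruct X) : Prop :=
  ∀ A B : Set X, C.AsympDisjoint A B →
    ∃ U V : Set X, C.AsympNbhd A U ∧ C.AsympNbhd B V ∧ Disjoint U V

end CoarseStruct

/-!
Submetrizability amounts to an unbounded macro-uniform function `f : X → ℝ`: such an `f` makes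
the pullback of the metric coarse structure of `ℝ` a metrizable unbounded enlargement, and
conversely, for a countable base made increasing with `Fₙ ○ Fₙ ⊆ Fₙ₊₁`, the level
`x ↦ min {n | (x₀, x) ∈ Fₙ}` is unbounded and macro-uniform. λ-equivalent structures have the
same bounded sets, so it remains to see that macro-uniformity passes from `C` to `C'`. If it
fails, some `C'`-entourage contains pairs `(aₖ, bₖ)` with `k < |f aₖ - f bⱼ|` for all `k, j`.
Then `{aₖ}` and `{bₖ}` are `C'`-close, hence `C'`-linked, hence `C`-linked; but `f` varies
boundedly across `C`-close sets, which no unbounded (so infinite) part of `{aₖ}` allows.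
-/

namespace CoarseStruct

open SetRel

variable {X : Type*} {C C' : CoarseStruct X} {A B : Set X} {f : X → ℝ} {K : SetRel X X}
  {e : ℕ → SetRel X X}

lemma mem_ball_singleton {E : SetRel X X} {x y : X} : y ∈ ball E {x} ↔ (x, y) ∈ E := by
  simp [ball]

lemma mem_ball_self {E : SetRel X X} (hE : E ∈ C.sets) (x : X) : x ∈ ball E {x} :=
  mem_ball_singleton.2 (C.diagonal_subset E hE rfl)

lemma comp_mem' {E F : SetRel X X} (hE : E ∈ C.sets) (hF : F ∈ C.sets) : E ○ F ∈ C.sets :=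
  C.comp_mem E hE F hF

lemma inv_mem' {E : SetRel X X} (hE : E ∈ C.sets) : E.inv ∈ C.sets :=
  C.inv_mem E hE

lemma isRefl_of_mem {E : SetRel X X} (hE : E ∈ C.sets) : E.IsRefl :=
  id_subset_iff.1 fun _ hp => C.diagonal_subset E hE hp

lemma IsBounded.subset (hB : C.IsBounded B) (hAB : A ⊆ B) : C.IsBounded A :=
  let ⟨E, hE, x, hx⟩ := hB
  ⟨E, hE, x, hAB.trans hx⟩

lemma IsBounded.of_subset_ball (hK : K ∈ C.sets) (hAB : A ⊆ ball K B)
    (hB : C.IsBounded B) : C.IsBounded A := by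
  obtain ⟨E, hE, x, hx⟩ := hB
  refine ⟨E ○ K, comp_mem' hE hK, x, fun a ha => ?_⟩
  obtain ⟨b, hb, hba⟩ := hAB ha
  exact mem_ball_singleton.2 ⟨b, mem_ball_singleton.1 (hx hb), hba⟩

lemma isBounded_empty (C : CoarseStruct X) [Nonempty X] : C.IsBounded ∅ :=
  ⟨_, C.diagonal_mem, Classical.arbitrary X, empty_subset _⟩

lemma IsBounded.insert (hA : C.IsBounded A) (a : X) : C.IsBounded (insert a A) := by
  obtain ⟨E, hE, x, hx⟩ := hA
  obtain ⟨E', hE', hxa⟩ := C.cover (x, a)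
  have := isRefl_of_mem hE
  have := isRefl_of_mem hE'
  refine ⟨E ○ E', comp_mem' hE hE', x, insert_subset ?_ fun y hy => ?_⟩
  · exact mem_ball_singleton.2 (right_subset_comp hxa)
  · exact mem_ball_singleton.2 (left_subset_comp (mem_ball_singleton.1 (hx hy)))

lemma isBounded_of_finite [Nonempty X] (C : CoarseStruct X) (hA : A.Finite) :
    C.IsBounded A :=
  hA.induction_on _ (isBounded_empty C) fun _ _ hs => hs.insert _

lemma Close.linked (hAB : C.Close A B) : C.Linked A B := by
  obtain ⟨K, hK, hAK, hBK⟩ := hAB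
  by_cases hA : C.IsBounded A
  · exact Or.inl ⟨hA, hA.of_subset_ball hK hBK⟩
  · exact Or.inr ⟨A, B, subset_rfl, subset_rfl, hA,
      fun hB => hA (hB.of_subset_ball hK hAK), K, hK, hAK, hBK⟩

lemma LambdaEquiv.symm (h : LambdaEquiv C C') : LambdaEquiv C' C :=
  fun A B => (h A B).symm

lemma IsBounded.of_lambdaEquiv (h : LambdaEquiv C C') (hA : C.IsBounded A) :
    C'.IsBounded A := by
  obtain ⟨-, -, x, -⟩ := id hA
  have : Nonempty X := ⟨x⟩
  rcases (h A ∅).1 (Or.inl ⟨hA, isBounded_empty C⟩) with ⟨hA', -⟩ | ⟨-, B', -, hB', -, hB'ub, -⟩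
  · exact hA'
  · exact absurd ((isBounded_empty C').subset hB') hB'ub

lemma macroUniform_iff :
    C.MacroUniform f ↔ ∀ E ∈ C.sets, ∃ r : ℝ, ∀ p ∈ E, |f p.1 - f p.2| ≤ r := by
  refine ⟨fun hf E hE => ?_, fun hf E hE => ?_⟩
  · obtain ⟨r, -, hr⟩ := hf E hE
    exact ⟨r, fun p hp => hr p.1 p.1 (mem_ball_self hE _) p.2 (mem_ball_singleton.2 hp)⟩
  · obtain ⟨r, hr⟩ := hf _ (comp_mem' (inv_mem' hE) hE)
    refine ⟨max r 1, by positivity, fun x y hy z hz => (hr (y, z) ?_).trans (le_max_left _ _)⟩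
    exact ⟨x, mem_inv.2 (mem_ball_singleton.1 hy), mem_ball_singleton.1 hz⟩

lemma MacroUniform.mono (hf : C'.MacroUniform f) (hCC' : C.sets ⊆ C'.sets) : C.MacroUniform f :=
  fun E hE => hf E (hCC' hE)

def induced (f : X → ℝ) : CoarseStruct X where
  sets := {E | diagonal X ⊆ E ∧ ∃ r : ℝ, ∀ p ∈ E, |f p.1 - f p.2| ≤ r}
  diagonal_mem := ⟨subset_rfl, 0, fun p (hp : p.1 = p.2) => by simp [hp]⟩
  diagonal_subset _ hE := hE.1
  comp_mem := by
    rintro E ⟨hEd, r, hr⟩ F ⟨hFd, s, hs⟩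
    refine ⟨fun p (hp : p.1 = p.2) => ⟨p.2, hp ▸ hEd rfl, hFd rfl⟩, r + s, ?_⟩
    rintro ⟨x, y⟩ ⟨z, hxz, hzy⟩
    exact (abs_sub_le _ (f z) _).trans (add_le_add (hr _ hxz) (hs _ hzy))
  inv_mem := by
    rintro E ⟨hEd, r, hr⟩
    refine ⟨fun p (hp : p.1 = p.2) => hEd hp.symm, r, fun p hp => ?_⟩
    simpa only [abs_sub_comm] using hr _ hp
  subset_mem := by
    rintro E ⟨-, r, hr⟩ E' hE'd hE'E
    exact ⟨hE'd, r, fun p hp => hr p (hE'E hp)⟩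
  cover p := by
    refine ⟨insert p (diagonal X), ⟨subset_insert _ _, |f p.1 - f p.2|, ?_⟩, mem_insert _ _⟩
    rintro q (rfl | (hq : q.1 = q.2))
    · exact le_rfl
    · simp [hq]

lemma metrizable_induced (f : X → ℝ) : (induced f).Metrizable := by
  refine ⟨range fun n : ℕ => {p | |f p.1 - f p.2| ≤ n}, countable_range _, ?_, ?_⟩
  · rintro _ ⟨n, rfl⟩
    exact ⟨fun p (hp : p.1 = p.2) => by simp [hp], n, fun _ hp => hp⟩
  · rintro E ⟨-, r, hr⟩
    obtain ⟨n, hn⟩ := exists_nat_ge r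
    exact ⟨_, ⟨n, rfl⟩, fun p hp => (hr p hp).trans hn⟩

lemma not_isBounded_univ_induced (hf : ¬BddAbove (range f)) :
    ¬(induced f).IsBounded univ := by
  rintro ⟨E, ⟨-, r, hr⟩, x, hx⟩
  refine hf ⟨f x + r, ?_⟩
  rintro _ ⟨y, rfl⟩
  have := (abs_sub_le_iff.1 (hr (x, y) (mem_ball_singleton.1 (hx (mem_univ y))))).2
  linarith

lemma MacroUniform.sets_subset_induced (hf : C.MacroUniform f) : C.sets ⊆ (induced f).sets :=
  fun E hE => ⟨C.diagonal_subset E hE, macroUniform_iff.1 hf E hE⟩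

lemma union_mem' {E F : SetRel X X} (hE : E ∈ C.sets) (hF : F ∈ C.sets) : E ∪ F ∈ C.sets := by
  have := isRefl_of_mem hE
  have := isRefl_of_mem hF
  exact C.subset_mem _ (comp_mem' hE hF) _ (fun _ hp => Or.inl (C.diagonal_subset E hE hp))
    (union_subset left_subset_comp right_subset_comp)

lemma Metrizable.exists_seq (hC : C.Metrizable) :
    ∃ e : ℕ → SetRel X X, (∀ n, e n ∈ C.sets) ∧ ∀ E ∈ C.sets, ∃ n, E ⊆ e n := by
  obtain ⟨B, hBc, hBC, hB⟩ := hC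
  obtain ⟨e, rfl⟩ := hBc.exists_eq_range (let ⟨E, hE, _⟩ := hB _ C.diagonal_mem; ⟨E, hE⟩)
  refine ⟨e, fun n => hBC ⟨n, rfl⟩, fun E hE => ?_⟩
  obtain ⟨_, ⟨n, rfl⟩, hEn⟩ := hB E hE
  exact ⟨n, hEn⟩

def exhaustion (e : ℕ → SetRel X X) : ℕ → SetRel X X
  | 0 => e 0
  | n + 1 => (exhaustion e n ○ exhaustion e n) ∪ e (n + 1)

lemma exhaustion_mem (he : ∀ n, e n ∈ C.sets) : ∀ n, exhaustion e n ∈ C.sets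
  | 0 => he 0
  | n + 1 => union_mem' (comp_mem' (exhaustion_mem he n) (exhaustion_mem he n)) (he _)

lemma subset_exhaustion : ∀ n, e n ⊆ exhaustion e n
  | 0 => subset_rfl
  | _ + 1 => subset_union_right

lemma comp_subset_exhaustion_succ (n : ℕ) :
    exhaustion e n ○ exhaustion e n ⊆ exhaustion e (n + 1) :=
  subset_union_left

lemma monotone_exhaustion (he : ∀ n, e n ∈ C.sets) : Monotone (exhaustion e) :=
  monotone_nat_of_le_succ fun n =>
    have := isRefl_of_mem (exhaustion_mem he n)
    left_subset_comp.trans (comp_subset_exhaustion_succ n)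

theorem Metrizable.exists_macroUniform_not_bddAbove [Nonempty X] (hC : C.Metrizable)
    (hub : ¬C.IsBounded univ) : ∃ f : X → ℝ, C.MacroUniform f ∧ ¬BddAbove (range f) := by
  obtain ⟨e, he, hbase⟩ := hC.exists_seq
  set F := exhaustion e
  have hFmono := monotone_exhaustion he
  have hcover : ∀ E ∈ C.sets, ∃ n, E ⊆ F n := fun E hE =>
    (hbase E hE).imp fun n hn => hn.trans (subset_exhaustion n)
  obtain ⟨x₀⟩ := ‹Nonempty X›
  have hlevel : ∀ x, ∃ n, (x₀, x) ∈ F n := fun x =>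
    let ⟨E, hE, hx⟩ := C.cover (x₀, x)
    (hcover E hE).imp fun _ hn => hn hx
  classical
  let level : X → ℕ := fun x => Nat.find (hlevel x)
  have hlevel_mem : ∀ x, (x₀, x) ∈ F (level x) := fun x => Nat.find_spec (hlevel x)
  have hlevel_le : ∀ E ∈ C.sets, ∃ m : ℕ, ∀ x y, (x, y) ∈ E →
      (level y : ℝ) ≤ level x + m + 1 := by
    intro E hE
    obtain ⟨m, hm⟩ := hcover E hE
    refine ⟨m, fun x y hxy => ?_⟩
    have : level y ≤ level x + m + 1 := Nat.find_min' _ <| comp_subset_exhaustion_succ _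
      ⟨x, hFmono (by omega) (hlevel_mem x), hFmono (by omega) (hm hxy)⟩
    exact_mod_cast this
  refine ⟨fun x => level x, macroUniform_iff.2 fun E hE => ?_, ?_⟩
  · obtain ⟨m, hm⟩ := hlevel_le E hE
    obtain ⟨m', hm'⟩ := hlevel_le _ (inv_mem' hE)
    exact ⟨m + m' + 1, fun p hp => abs_sub_le_iff.2
      ⟨by linarith [hm' p.2 p.1 hp], by linarith [hm p.1 p.2 hp]⟩⟩
  · rintro ⟨N, hN⟩
    refine hub ⟨F ⌈N⌉₊, exhaustion_mem he _, x₀, fun x _ => ?_⟩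
    have hxN : (level x : ℝ) ≤ N := hN ⟨x, rfl⟩
    have : level x ≤ ⌈N⌉₊ := by exact_mod_cast hxN.trans (Nat.le_ceil N)
    exact mem_ball_singleton.2 (hFmono this (hlevel_mem x))

lemma exists_separated_seq_of_bounded_snd {M : ℝ}
    (hK : ∀ r : ℝ, ∃ p ∈ K, r < |f p.1 - f p.2| ∧ |f p.2| ≤ M) :
    ∃ a b : ℕ → X, (∀ k, (a k, b k) ∈ K) ∧ ∀ k j : ℕ, (k : ℝ) < |f (a k) - f (b j)| := by
  choose p hpK hgap hsnd using hK
  let q : ℕ → X × X := fun k => p (k + 2 * M)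
  refine ⟨fun k => (q k).1, fun j => (q j).2, fun k => hpK _, fun k j => ?_⟩
  have htri := abs_sub_le (f (q k).1) (f (q j).2) (f (q k).2)
  have hsnd' := abs_sub (f (q j).2) (f (q k).2)
  linarith [hgap (k + 2 * M), hsnd (k + 2 * M), hsnd (j + 2 * M)]

lemma exists_separated_seq_of_forall_lt
    (hK : ∀ T : ℝ, ∃ p ∈ K, T < |f p.1| ∧ T < |f p.2| ∧ T < |f p.1 - f p.2|) :
    ∃ a b : ℕ → X, (∀ k, (a k, b k) ∈ K) ∧ ∀ k j : ℕ, (k : ℝ) < |f (a k) - f (b j)| := by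
  choose p hpK hfst hsnd hgap using hK
  let size : X × X → ℝ := fun q => max |f q.1| |f q.2|
  -- the `k`-th pair lies beyond `t k`, which exceeds all values of earlier pairs by `k`
  let t : ℕ → ℝ := fun k => Nat.rec 0 (fun i ti => size (p ti) + i + 1) k
  have ht_succ : ∀ i, t (i + 1) = size (p (t i)) + i + 1 := fun _ => rfl
  have hsize_mono : Monotone fun k => size (p (t k)) := by
    refine monotone_nat_of_le_succ fun i => ?_
    have h1 := hfst (t (i + 1))
    have h2 : |f (p (t (i + 1))).1| ≤ size (p (t (i + 1))) := le_max_left _ _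
    rw [ht_succ] at h1
    linarith
  have hthr : ∀ k i, k ≤ i → size (p (t k)) + i + 1 ≤ t (i + 1) := fun k i hki => by
    rw [ht_succ]
    linarith [hsize_mono hki]
  have hk_le : ∀ k : ℕ, (k : ℝ) ≤ t k
    | 0 => by simp [t]
    | i + 1 => by
      have : 0 ≤ size (p (t i)) := (abs_nonneg _).trans (le_max_left _ _)
      rw [ht_succ]
      push_cast
      linarith
  refine ⟨fun k => (p (t k)).1, fun j => (p (t j)).2, fun k => hpK _, fun k j => ?_⟩
  rcases lt_trichotomy j k with hjk | rfl | hkj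
  · obtain ⟨i, rfl⟩ : ∃ i, k = i + 1 := ⟨k - 1, by omega⟩
    have h1 := hthr j i (by omega)
    have h2 := hfst (t (i + 1))
    have h3 : |f (p (t j)).2| ≤ size (p (t j)) := le_max_right _ _
    have h4 := abs_sub_abs_le_abs_sub (f (p (t (i + 1))).1) (f (p (t j)).2)
    push_cast
    linarith
  · exact (hk_le _).trans_lt (hgap _)
  · obtain ⟨i, rfl⟩ : ∃ i, j = i + 1 := ⟨j - 1, by omega⟩
    have h1 := hthr k i (by omega)
    have h2 := hsnd (t (i + 1))
    have h3 : |f (p (t k)).1| ≤ size (p (t k)) := le_max_left _ _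
    have h4 := abs_sub_abs_le_abs_sub (f (p (t (i + 1))).2) (f (p (t k)).1)
    have h5 : (k : ℝ) ≤ i := by exact_mod_cast (by omega : k ≤ i)
    rw [abs_sub_comm]
    linarith

lemma exists_separated_seq [K.IsSymm] (hunb : ∀ r : ℝ, ∃ p ∈ K, r < |f p.1 - f p.2|) :
    ∃ a b : ℕ → X, (∀ k, (a k, b k) ∈ K) ∧ ∀ k j : ℕ, (k : ℝ) < |f (a k) - f (b j)| := by
  by_cases hsnd : ∃ M : ℝ, ∀ r : ℝ, ∃ p ∈ K, r < |f p.1 - f p.2| ∧ |f p.2| ≤ M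
  · obtain ⟨M, hM⟩ := hsnd
    exact exists_separated_seq_of_bounded_snd hM
  push Not at hsnd
  refine exists_separated_seq_of_forall_lt fun T => ?_
  obtain ⟨r, hr⟩ := hsnd T
  obtain ⟨p, hpK, hp⟩ := hunb (max r T)
  have hr' : r < |f p.1 - f p.2| := (le_max_left _ _).trans_lt hp
  refine ⟨p, hpK, ?_, hr p hpK hr', (le_max_right _ _).trans_lt hp⟩
  exact hr (p.2, p.1) (K.symm hpK) (by rwa [abs_sub_comm])

lemma not_linked_range_of_separated (hf : C.MacroUniform f) {a b : ℕ → X}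
    (hsep : ∀ k j : ℕ, (k : ℝ) < |f (a k) - f (b j)|) : ¬C.Linked (range a) (range b) := by
  have : Nonempty X := ⟨a 0⟩
  rintro (⟨⟨E, hE, x, hx⟩, -⟩ | ⟨A, B, hA, hB, hAub, -, E, hE, hAB, -⟩)
  · obtain ⟨r, -, hr⟩ := hf E hE
    obtain ⟨k, hk⟩ := exists_nat_gt (r + |f (a 0) - f (b 0)|)
    have h1 := hr x (a k) (hx ⟨k, rfl⟩) (a 0) (hx ⟨0, rfl⟩)
    have h2 := abs_sub_le (f (a k)) (f (a 0)) (f (b 0))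
    linarith [hsep k 0]
  · obtain ⟨r, -, hr⟩ := hf E hE
    obtain ⟨K, hK⟩ := exists_nat_gt r
    obtain ⟨_, hkA, hk⟩ := not_subset.1 fun hsub =>
      hAub ((isBounded_of_finite C ((finite_Iio K).image a)).subset hsub)
    obtain ⟨k, rfl⟩ := hA hkA
    obtain ⟨_, hbB, hba⟩ := hAB hkA
    obtain ⟨j, rfl⟩ := hB hbB
    have hKk : (K : ℝ) ≤ k := by exact_mod_cast not_lt.1 fun hlt => hk ⟨k, hlt, rfl⟩
    have := hr (b j) (a k) (mem_ball_singleton.2 hba) (b j) (mem_ball_self hE _)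
    linarith [hsep k j]

theorem MacroUniform.of_lambdaEquiv (h : LambdaEquiv C C') (hf : C.MacroUniform f) :
    C'.MacroUniform f := by
  refine macroUniform_iff.2 fun (E : SetRel X X) hE => ?_
  by_contra! hunb
  have : E.inv.IsRefl := ⟨fun x => (isRefl_of_mem hE).refl x⟩
  obtain ⟨a, b, hab, hsep⟩ := exists_separated_seq (K := E.inv ○ E) fun r =>
    let ⟨p, hpE, hp⟩ := hunb r
    ⟨p, right_subset_comp hpE, hp⟩
  have hclose : C'.Close (range a) (range b) := by
    refine ⟨E.inv ○ E, comp_mem' (inv_mem' hE) hE, ?_, ?_⟩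
    · rintro _ ⟨k, rfl⟩
      exact ⟨b k, ⟨k, rfl⟩, SetRel.symm _ (hab k)⟩
    · rintro _ ⟨k, rfl⟩
      exact ⟨a k, ⟨k, rfl⟩, hab k⟩
  exact not_linked_range_of_separated hf hsep ((h _ _).2 hclose.linked)

lemma submetrizable_of_isEmpty [IsEmpty X] (C : CoarseStruct X) : C.Submetrizable := by
  have hub : ¬C.IsBounded univ := fun ⟨_, _, x, _⟩ => isEmptyElim x
  exact ⟨hub, C, subset_rfl, hub, {diagonal X}, countable_singleton _,
    singleton_subset_iff.2 C.diagonal_mem, fun _ _ => ⟨_, rfl, fun p _ => isEmptyElim p.1⟩⟩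

end CoarseStruct

/-- The class of submetrizable coarse spaces is λ-stable. -/
theorem submetrizable_lambdaStable {X : Type*} (C C' : CoarseStruct X)
    (hC : C.Submetrizable) (h : CoarseStruct.LambdaEquiv C C') :
    C'.Submetrizable := by
  rcases isEmpty_or_nonempty X with hX | hX
  · exact C'.submetrizable_of_isEmpty
  obtain ⟨hCub, C'', hCC'', hC''ub, hC''⟩ := hC
  obtain ⟨f, hf, hfub⟩ := hC''.exists_macroUniform_not_bddAbove hC''ub
  have hf' : C'.MacroUniform f := (hf.mono hCC'').of_lambdaEquiv h
  exact ⟨fun hb => hCub (hb.of_lambdaEquiv h.symm), CoarseStruct.induced f,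
    hf'.sets_subset_induced, CoarseStruct.not_isBounded_univ_induced hfub,
    CoarseStruct.metrizable_induced f⟩
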